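/- Let G be a finite graph equipped with an edge ordering, let H = G∖T for a set of edges T, and form the auxiliary digraph D on ℕ × V(G) with a directed edge from ht_G(e) to ht_H(e) for each e ∈ E(H) with ht_G(e) ≠ ht_H(e). Then every vertex of D has in-degree at most 1 and out-degree at most 1, and D contains no directed cycle; consequently D is a vertex-disjoint union of directed paths. -/

import Mathlib

open scoped Classical

namespace EO

/-- Auxiliary choice function for building the height table: given the list `prev` of the
(optional) entries at all earlier scanning positions, `htPick N G w k prev` is the entry at
scanning position `k`, namely the `w`-largest edge of `G` containing the column vertex
`⟨k % N⟩` of position `k` that does not occur among the earlier entries, if any exists. -/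
noncomputable def htPick (N : ℕ) (G : SimpleGraph (Fin N)) (w : Sym2 (Fin N) → ℕ)
    (k : ℕ) (prev : List (Option (Sym2 (Fin N)))) : Option (Sym2 (Fin N)) :=
  if hN : 0 < N then
    if h : ∃ e, (e ∈ G.edgeSet ∧ (⟨k % N, Nat.mod_lt k hN⟩ : Fin N) ∈ e ∧
          some e ∉ prev) ∧
        ∀ f, (f ∈ G.edgeSet ∧ (⟨k % N, Nat.mod_lt k hN⟩ : Fin N) ∈ f ∧
          some f ∉ prev) → w f ≤ w e
    then some h.choose else none
  else none

/-- The list of the first `k` entries of the height table of the ordered graph `G`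
(vertex set `Fin N` with its natural vertex order, edge order given by the injective
weight `w`).  Scanning position `k` corresponds to row `k / N + 1` and column `⟨k % N⟩`,
so scanning positions in increasing order of `k` is exactly scanning the table in
increasing lexicographic order (row first, then vertex order within a row). -/
noncomputable def htList (N : ℕ) (G : SimpleGraph (Fin N)) (w : Sym2 (Fin N) → ℕ) :
    ℕ → List (Option (Sym2 (Fin N)))
  | 0 => []
  | k + 1 => htList N G w k ++ [htPick N G w k (htList N G w k)]

/-- The entry of the height table of `G` at scanning position `k`: the `w`-largest
not-yet-entered edge containing the column vertex of position `k`, if any. -/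
noncomputable def htEntry (N : ℕ) (G : SimpleGraph (Fin N)) (w : Sym2 (Fin N) → ℕ)
    (k : ℕ) : Option (Sym2 (Fin N)) :=
  htPick N G w k (htList N G w k)

/-- The scanning index at which the edge `e` is entered into the height table
(junk value `0` if `e` is never entered; every edge of `G` is in fact entered exactly
once).  The lexicographic order on table positions corresponds exactly to the order of
scanning indices. -/
noncomputable def htIndex (N : ℕ) (G : SimpleGraph (Fin N)) (w : Sym2 (Fin N) → ℕ)
    (e : Sym2 (Fin N)) : ℕ :=
  if h : ∃ k, htEntry N G w k = some e then Nat.find h else 0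

/-- The height (row, `1`-indexed) of the edge `e` in the height table of `G`. -/
noncomputable def height (N : ℕ) (G : SimpleGraph (Fin N)) (w : Sym2 (Fin N) → ℕ)
    (e : Sym2 (Fin N)) : ℕ :=
  htIndex N G w e / N + 1

/-- The index of the column (vertex) of the edge `e` in the height table of `G`. -/
noncomputable def col (N : ℕ) (G : SimpleGraph (Fin N)) (w : Sym2 (Fin N) → ℕ)
    (e : Sym2 (Fin N)) : ℕ :=
  htIndex N G w e % N

/-- The column vertex of the edge `e` in the height table of `G` (for `N > 0`). -/
noncomputable def colV (N : ℕ) (hN : 0 < N) (G : SimpleGraph (Fin N))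
    (w : Sym2 (Fin N) → ℕ) (e : Sym2 (Fin N)) : Fin N :=
  ⟨htIndex N G w e % N, Nat.mod_lt _ hN⟩

/-- A list of edges is increasing (with respect to the edge order given by `w`) if
consecutive entries are strictly increasing. -/
def Increasing {V : Type*} (w : Sym2 V → ℕ) (l : List (Sym2 V)) : Prop :=
  l.Chain' fun a b => w a < w b

end EO

/-!
Scanning positions in the order of their index `k`, the column vertex of `k` is `k % N` and its
row is `k / N + 1`, so a table position determines its scanning index and conversely.  Hence
both degree bounds reduce to the fact that distinct edges occupy distinct positions of a height
table.  For acyclicity one shows `ht_H(e) ≤ ht_G(e)` for every edge `e` of a subgraph `H ≤ G`,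
by strong induction on `ht_G(e)`: were `e` still unplaced in `H` at `ht_G(e)`, the edge `f` placed
there in `H` would be larger than `e`, hence already placed in `G` earlier, and by induction
already placed in `H` earlier too.
-/

namespace EO

section HeightTable

variable {N : ℕ} (G : SimpleGraph (Fin N)) (w : Sym2 (Fin N) → ℕ)

def Available (hN : 0 < N) (k : ℕ) (e : Sym2 (Fin N)) : Prop :=
  e ∈ G.edgeSet ∧ (⟨k % N, Nat.mod_lt k hN⟩ : Fin N) ∈ e ∧ some e ∉ htList N G w k

theorem htList_eq_map_range (k : ℕ) : htList N G w k = (List.range k).map (htEntry N G w) := by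
  induction k with
  | zero => rfl
  | succ k ih => rw [htList, List.range_succ, List.map_append, List.map_singleton, ← ih]; rfl

theorem some_mem_htList_iff {e : Sym2 (Fin N)} {k : ℕ} :
    some e ∈ htList N G w k ↔ ∃ j < k, htEntry N G w j = some e := by
  simp [htList_eq_map_range]

theorem htEntry_eq_some_spec {k : ℕ} {e : Sym2 (Fin N)} (h : htEntry N G w k = some e) :
    ∃ hN : 0 < N, Available G w hN k e ∧ ∀ f, Available G w hN k f → w f ≤ w e := by
  rw [htEntry, htPick] at h
  split_ifs at h with hN hmax
  obtain rfl := Option.some.inj h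
  exact ⟨hN, hmax.choose_spec⟩

theorem htEntry_isSome {k : ℕ} {e : Sym2 (Fin N)} (hN : 0 < N) (he : Available G w hN k e) :
    (htEntry N G w k).isSome := by
  obtain ⟨f, hf, hmax⟩ :=
    Set.exists_max_image {f | Available G w hN k f} w (Set.toFinite _) ⟨e, he⟩
  have hpick : ∃ f, Available G w hN k f ∧ ∀ g, Available G w hN k g → w g ≤ w f :=
    ⟨f, hf, hmax⟩
  unfold Available at hpick
  rw [htEntry, htPick, dif_pos hN, dif_pos hpick]
  rfl

theorem htIndex_eq_of_htEntry_eq_some {k : ℕ} {e : Sym2 (Fin N)}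
    (h : htEntry N G w k = some e) : htIndex N G w e = k := by
  have hex : ∃ k, htEntry N G w k = some e := ⟨k, h⟩
  rw [htIndex, dif_pos hex]
  refine le_antisymm (Nat.find_min' hex h) (not_lt.1 fun hlt => ?_)
  obtain ⟨_, ⟨-, -, hnew⟩, -⟩ := htEntry_eq_some_spec G w h
  exact hnew ((some_mem_htList_iff G w).2 ⟨_, hlt, Nat.find_spec hex⟩)

/-- Every edge is eventually entered: otherwise the positions of one of its endpoints `v`,
in rows `1, 2, 3, …`, would all receive distinct edges through `v`. -/
theorem exists_htEntry_eq_some {e : Sym2 (Fin N)} (he : e ∈ G.edgeSet) :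
    ∃ k, htEntry N G w k = some e := by
  by_contra! hnever
  obtain ⟨v, hv⟩ : ∃ v, v ∈ e := ⟨_, Sym2.out_fst_mem e⟩
  have hN : 0 < N := v.pos
  have hcol (j : ℕ) : (⟨(v + j * N) % N, Nat.mod_lt _ hN⟩ : Fin N) = v := by
    ext; simp [Nat.mod_eq_of_lt v.isLt]
  have hfilled (j : ℕ) : (htEntry N G w (v + j * N)).isSome := by
    refine htEntry_isSome G w hN ⟨he, (hcol j).symm ▸ hv, fun hmem => ?_⟩
    obtain ⟨i, -, hi⟩ := (some_mem_htList_iff G w).1 hmem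
    exact hnever i hi
  have hinj : Function.Injective fun j => (htEntry N G w (v + j * N)).get (hfilled j) := by
    intro i j hij
    have hi := htIndex_eq_of_htEntry_eq_some G w (Option.eq_some_of_isSome (hfilled i))
    have hj := htIndex_eq_of_htEntry_eq_some G w (Option.eq_some_of_isSome (hfilled j))
    simp only at hij
    rw [hij, hj] at hi
    exact (Nat.eq_of_mul_eq_mul_right hN (by omega)).symm
  exact not_injective_infinite_finite _ hinj

theorem htEntry_htIndex {e : Sym2 (Fin N)} (he : e ∈ G.edgeSet) :
    htEntry N G w (htIndex N G w e) = some e := by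
  obtain ⟨k, hk⟩ := exists_htEntry_eq_some G w he
  rwa [htIndex_eq_of_htEntry_eq_some G w hk]

theorem htIndex_injOn : Set.InjOn (htIndex N G w) G.edgeSet := fun _ he _ hf hef =>
  Option.some.inj <| (htEntry_htIndex G w he).symm.trans (hef ▸ htEntry_htIndex G w hf)

theorem htIndex_le_of_le (hw : Function.Injective w) {H : SimpleGraph (Fin N)} (hHG : H ≤ G)
    {e : Sym2 (Fin N)} (he : e ∈ H.edgeSet) : htIndex N H w e ≤ htIndex N G w e := by
  induction hk : htIndex N G w e using Nat.strong_induction_on generalizing e with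
  | _ k ih =>
  by_contra! hlt
  obtain ⟨hN, ⟨-, hv, -⟩, hmaxG⟩ :=
    htEntry_eq_some_spec G w (hk ▸ htEntry_htIndex G w (SimpleGraph.edgeSet_mono hHG he))
  have heH : Available H w hN k e := by
    refine ⟨he, hv, fun hmem => ?_⟩
    obtain ⟨j, hj, hej⟩ := (some_mem_htList_iff H w).1 hmem
    have := htIndex_eq_of_htEntry_eq_some H w hej
    omega
  obtain ⟨f, hf⟩ := Option.isSome_iff_exists.1 (htEntry_isSome H w hN heH)
  obtain ⟨_, ⟨hfH, hvf, -⟩, hmaxH⟩ := htEntry_eq_some_spec H w hf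
  have hfk : htIndex N H w f = k := htIndex_eq_of_htEntry_eq_some H w hf
  have hfe : f ≠ e := by rintro rfl; omega
  have hwef : w e < w f := (hmaxH e heH).lt_of_ne fun h => hfe (hw h).symm
  have hfG : some f ∈ htList N G w k := by
    by_contra hnew
    exact (hmaxG f ⟨SimpleGraph.edgeSet_mono hHG hfH, hvf, hnew⟩).not_gt hwef
  obtain ⟨j, hjk, hfj⟩ := (some_mem_htList_iff G w).1 hfG
  have := ih j hjk hfH (htIndex_eq_of_htEntry_eq_some G w hfj)
  omega

end HeightTable

def tablePos (N k : ℕ) : ℕ × ℕ := (k / N + 1, k % N)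

def tableIndex (N : ℕ) (p : ℕ × ℕ) : ℕ := (p.1 - 1) * N + p.2

theorem tableIndex_tablePos (N k : ℕ) : tableIndex N (tablePos N k) = k := by
  simpa [tableIndex, tablePos, Nat.mul_comm] using Nat.div_add_mod k N

theorem tablePos_injective (N : ℕ) : Function.Injective (tablePos N) :=
  Function.LeftInverse.injective (tableIndex_tablePos N)

theorem not_transGen_self_of_decreasing {α : Type*} {r : α → α → Prop} (m : α → ℕ)
    (hm : ∀ a b, r a b → m b < m a) (a : α) : ¬ Relation.TransGen r a a := fun h =>
  lt_irrefl _ <|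
    Relation.transGen_eq_self (α := ℕ) (r := (· > ·)) ▸ Relation.TransGen.lift m hm a a h

end EO

/-- from the proof of Lemma 3.1.  Let `G` be an ordered graph,
`H = G∖T` for a set of edges `T`, and let `D` be the auxiliary digraph on table positions
(row, column-index pairs) with a directed edge from `ht_G(e)` to `ht_H(e)` for each edge
`e ∈ E(H)` with `ht_G(e) ≠ ht_H(e)`.  Then every vertex of `D` has out-degree at most `1`
and in-degree at most `1`, and `D` has no directed cycle; consequently `D` is a
vertex-disjoint union of directed paths. -/
theorem stmt18 (N : ℕ) (G : SimpleGraph (Fin N)) (wt : Sym2 (Fin N) → ℕ)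
    (hw : Function.Injective wt) (T : Set (Sym2 (Fin N))) :
    ∀ D : ℕ × ℕ → ℕ × ℕ → Prop,
      (D = fun p q => ∃ e ∈ (G.deleteEdges T).edgeSet,
        p = (EO.height N G wt e, EO.col N G wt e) ∧
        q = (EO.height N (G.deleteEdges T) wt e, EO.col N (G.deleteEdges T) wt e) ∧
        p ≠ q) →
      (∀ p : ℕ × ℕ, {q | D p q}.Subsingleton) ∧
      (∀ p : ℕ × ℕ, {q | D q p}.Subsingleton) ∧
      (∀ p : ℕ × ℕ, ¬ Relation.TransGen D p p) := by
  rintro D rfl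
  have hHG := G.deleteEdges_le T
  refine ⟨?_, ?_, EO.not_transGen_self_of_decreasing (EO.tableIndex N) ?_⟩
  · rintro _ _ ⟨e, he, rfl, rfl, -⟩ _ ⟨f, hf, hef, rfl, -⟩
    obtain rfl := EO.htIndex_injOn G wt (SimpleGraph.edgeSet_mono hHG he)
      (SimpleGraph.edgeSet_mono hHG hf) (EO.tablePos_injective N hef)
    rfl
  · rintro _ _ ⟨e, he, rfl, rfl, -⟩ _ ⟨f, hf, rfl, hef, -⟩
    obtain rfl := EO.htIndex_injOn _ wt he hf (EO.tablePos_injective N hef)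
    rfl
  · rintro _ _ ⟨e, he, rfl, rfl, hne⟩
    have hle := EO.htIndex_le_of_le G wt hw hHG he
    have hne' : EO.htIndex N (G.deleteEdges T) wt e ≠ EO.htIndex N G wt e := fun h =>
      hne (congrArg (EO.tablePos N) h.symm)
    change EO.tableIndex N (EO.tablePos N _) < EO.tableIndex N (EO.tablePos N _)
    rw [EO.tableIndex_tablePos, EO.tableIndex_tablePos]
    omega
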